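/- Let G be connected with modulator to cluster graph U, and let P be a shortest path in G containing a vertex of U with ecc_G(P) = 1. Then for every vertex u of G, min{d_G(u, L), d_G(u, R_1) + 1} ≤ 2, where L = V(P) ∩ U and R_1 = {u ∈ U : d_G(u, V(P)) = 1}. -/

import Mathlib

/-!
A vertex of `U` off `P` lies in `R₁`, since `ecc_G(P) = 1`. A vertex `u ∉ U` is at distance at
most one from some `p ∈ P`; if `p ∉ U`, walk along `P` from `p` to a vertex of `U`. The vertex just
before the walk first enters `U` lies in the same clique of `G - U` as `u`, so the entry vertex,
which is in `L`, is at distance at most two from `u`.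
-/

open SimpleGraph

/-- `U` is a modulator to cluster graph: every connected component of `G - U` is a clique. -/
def IsClusterModulator {V : Type*} (G : SimpleGraph V) (U : Set V) : Prop :=
  ∀ u v : ↥Uᶜ, (G.induce Uᶜ).Reachable u v → u ≠ v → (G.induce Uᶜ).Adj u v

/-- distance from a vertex to a set of vertices -/
noncomputable def dset {V : Type*} (G : SimpleGraph V) (u : V) (S : Set V) : ℕ∞ :=
  ⨅ s ∈ S, G.edist u s

/-- eccentricity of a set of vertices -/
noncomputable def eccSet {V : Type*} (G : SimpleGraph V) (S : Set V) : ℕ∞ :=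
  ⨆ u, dset G u S

namespace SimpleGraph

variable {V : Type*} {G : SimpleGraph V}

lemma dset_le_edist {u s : V} {S : Set V} (hs : s ∈ S) : dset G u S ≤ G.edist u s :=
  iInf₂_le s hs

lemma dset_le_eccSet (u : V) (S : Set V) : dset G u S ≤ eccSet G S :=
  le_iSup (fun v => dset G v S) u

/-- The infimum defining `dset` is attained because `ℕ∞` is well-ordered. -/
lemma exists_mem_dset_eq (u : V) {S : Set V} (hS : S.Nonempty) :
    ∃ s ∈ S, dset G u S = G.edist u s := by
  have hmem := csInf_mem (hS.image fun s => G.edist u s)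
  rw [sInf_image] at hmem
  obtain ⟨s, hs, he⟩ := hmem
  exact ⟨s, hs, he.symm⟩

lemma dset_eq_zero_iff {u : V} {S : Set V} : dset G u S = 0 ↔ u ∈ S := by
  refine ⟨fun h => ?_, fun hu => nonpos_iff_eq_zero.mp ((dset_le_edist hu).trans_eq edist_self)⟩
  rcases S.eq_empty_or_nonempty with rfl | hS
  · simp [dset] at h
  · obtain ⟨s, hs, he⟩ := exists_mem_dset_eq (G := G) u hS
    rwa [edist_eq_zero_iff.mp (he.symm.trans h)]

lemma induce_reachable_of_edist_le_one {s : Set V} {x y : V} (hx : x ∈ s) (hy : y ∈ s)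
    (h : G.edist x y ≤ 1) : (G.induce s).Reachable ⟨x, hx⟩ ⟨y, hy⟩ := by
  rcases edist_le_one_iff_adj_or_eq.mp h with hadj | rfl
  · exact Adj.reachable (induce_adj.mpr hadj)
  · rfl

lemma Walk.exists_adj_of_exists_mem_support {U : Set V} {x y : V} (W : G.Walk x y)
    (hx : x ∈ Uᶜ) (hW : ∃ v ∈ U, v ∈ W.support) :
    ∃ r : ↥Uᶜ, ∃ q ∈ U, q ∈ W.support ∧ G.Adj r q ∧ (G.induce Uᶜ).Reachable ⟨x, hx⟩ r := by
  induction W with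
  | nil =>
    obtain ⟨v, hv, hvW⟩ := hW
    rw [Walk.support_nil, List.mem_singleton] at hvW
    exact absurd (hvW ▸ hv) hx
  | @cons x c y hxc W ih =>
    by_cases hc : c ∈ U
    · exact ⟨⟨x, hx⟩, c, hc, by simp, hxc, .rfl⟩
    · have hW' : ∃ v ∈ U, v ∈ W.support := by
        obtain ⟨v, hv, hvW⟩ := hW
        rw [Walk.support_cons, List.mem_cons] at hvW
        exact ⟨v, hv, hvW.resolve_left (by rintro rfl; exact hx hv)⟩
      obtain ⟨r, q, hq, hqW, hrq, hcr⟩ := ih hc hW'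
      exact ⟨r, q, hq, by simp [hqW], hrq,
        (induce_reachable_of_edist_le_one hx hc (edist_eq_one_iff_adj.mpr hxc).le).trans hcr⟩

namespace IsClusterModulator

variable {U : Set V}

lemma edist_le_one (hU : IsClusterModulator G U) {x y : ↥Uᶜ}
    (h : (G.induce Uᶜ).Reachable x y) : G.edist x y ≤ 1 := by
  by_cases hxy : x = y
  · simp [hxy]
  · exact (edist_eq_one_iff_adj.mpr (induce_adj.mp (hU x y h hxy))).le

lemma exists_mem_support_edist_le_two (hU : IsClusterModulator G U) {a b x z : V}
    (P : G.Walk a b) (hxP : x ∈ P.support) (hx : x ∈ Uᶜ) (hz : z ∈ Uᶜ)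
    (hzx : (G.induce Uᶜ).Reachable ⟨z, hz⟩ ⟨x, hx⟩) (hPU : ∃ v ∈ U, v ∈ P.support) :
    ∃ q ∈ U, q ∈ P.support ∧ G.edist z q ≤ 2 := by
  classical
  let W := (P.takeUntil x hxP).reverse.append P
  have hWP : W.support ⊆ P.support := by
    intro q hq
    rw [Walk.support_append, Walk.support_reverse, List.mem_append, List.mem_reverse] at hq
    exact hq.elim (fun h => P.support_takeUntil_subset_support hxP h) List.mem_of_mem_tail
  obtain ⟨v, hvU, hvP⟩ := hPU
  obtain ⟨r, q, hq, hqW, hrq, hxr⟩ :=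
    W.exists_adj_of_exists_mem_support hx ⟨v, hvU, by simp [W, hvP]⟩
  refine ⟨q, hq, hWP hqW, ?_⟩
  calc G.edist z q ≤ G.edist z r + G.edist r q := G.edist_triangle
    _ ≤ 1 + 1 := add_le_add (hU.edist_le_one (hzx.trans hxr)) (edist_eq_one_iff_adj.mpr hrq).le
    _ = 2 := by norm_num

end IsClusterModulator

end SimpleGraph

theorem stmt8_general {V : Type*} (G : SimpleGraph V)
    (U : Set V) (hU : IsClusterModulator G U)
    {a b : V} (P : G.Walk a b)
    (hPU : ∃ u ∈ U, u ∈ P.support)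
    (hecc : eccSet G {x | x ∈ P.support} = 1) :
    ∀ u : V,
      min (dset G u ({x | x ∈ P.support} ∩ U))
        (dset G u {w | w ∈ U ∧ dset G w {x | x ∈ P.support} = 1} + 1) ≤ 2 := by
  intro u
  set S : Set V := {x | x ∈ P.support}
  set R : Set V := {w | w ∈ U ∧ dset G w S = 1}
  have huS : dset G u S ≤ 1 := hecc ▸ dset_le_eccSet u S
  suffices (∃ q ∈ S ∩ U, G.edist u q ≤ 2) ∨ u ∈ R by
    rcases this with ⟨q, hq, huq⟩ | huR
    · exact (min_le_left _ _).trans ((dset_le_edist hq).trans huq)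
    · calc _ ≤ dset G u R + 1 := min_le_right _ _
        _ = 0 + 1 := by rw [dset_eq_zero_iff.mpr huR]
        _ ≤ 2 := by norm_num
  by_cases huU : u ∈ U
  · by_cases huP : u ∈ S
    · exact .inl ⟨u, ⟨huP, huU⟩, by simp⟩
    · exact .inr ⟨huU, le_antisymm huS (Order.one_le_iff_ne_zero.mpr (mt dset_eq_zero_iff.mp huP))⟩
  obtain ⟨w, hwU, hwP⟩ := hPU
  obtain ⟨p, hpP, hup⟩ := exists_mem_dset_eq (G := G) u (⟨w, hwP⟩ : S.Nonempty)
  replace hup : G.edist u p ≤ 1 := hup ▸ huS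
  by_cases hpU : p ∈ U
  · exact .inl ⟨p, ⟨hpP, hpU⟩, hup.trans (by norm_num)⟩
  obtain ⟨q, hqU, hqP, huq⟩ := hU.exists_mem_support_edist_le_two P hpP hpU huU
    (induce_reachable_of_edist_le_one huU hpU hup) ⟨w, hwU, hwP⟩
  exact .inl ⟨q, ⟨hqP, hqU⟩, huq⟩

/-- If `P` is a shortest path containing a vertex of `U` with `ecc_G(P) = 1`, then
for every vertex `u`, `min {d_G(u,L), d_G(u,R₁)+1} ≤ 2` where `L = V(P) ∩ U` and
`R₁ = {u ∈ U : d_G(u,V(P)) = 1}`. -/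
theorem stmt8 {V : Type*} [Fintype V] (G : SimpleGraph V) (hG : G.Connected)
    (U : Set V) (hU : IsClusterModulator G U)
    {a b : V} (P : G.Walk a b) (hP : P.IsPath) (hs : P.length = G.dist a b)
    (hPU : ∃ u ∈ U, u ∈ P.support)
    (hecc : eccSet G {x | x ∈ P.support} = 1) :
    ∀ u : V,
      min (dset G u ({x | x ∈ P.support} ∩ U))
        (dset G u {w | w ∈ U ∧ dset G w {x | x ∈ P.support} = 1} + 1) ≤ 2 :=
  stmt8_general G U hU P hPU hecc
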